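/- Let F be a nonarchimedean local field and Γ ⊆ PGL₂(F) a discrete cocompact subgroup. Then every point of P¹(F) ⊆ P¹(C) (C the completion of an algebraic closure of F) is a limit point of Γ: for each x ∈ P¹(F) there exist y ∈ P¹(C) and pairwise distinct γ_j ∈ Γ with γ_j(y) → x. -/

import Mathlib

/-!
Write `x = [v]` with `v ∈ F²`. Pick `w` with `w ⬝ v = 1` and `π ∈ F` with `0 < ‖π‖ < 1`. The
element `a = e + π (1 - e)` of `GL₂(F)`, where `e = v wᵀ` is the projection onto `F v`, fixes `v`
and contracts the complementary line, so `a ^ d u → v` for every `u` near `v`. Cocompactness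
gives a compact `K ⊆ GL₂(F)` and `k_d ∈ K` with `a ^ d k_d ∈ Γ`; along a subsequence `k_d → k₀`,
and then `γ_j = a ^ d_j k_{d_j}` moves `y = k₀⁻¹ x` to `x`.

The `γ_j` are distinct in `PGL₂(F)`: the scale-invariant quantity `‖tr g‖² / ‖det g‖` is bounded
on the compact set `K K⁻¹`, whereas on `a ^ d` it equals `‖1 + π ^ d‖² / ‖π‖ ^ d → ∞`. So
`γ_i = γ_j` forces `d_j - d_i` to be bounded, which spacing the `d_j` far apart rules out.
-/

open Filter Matrix

noncomputable section

/-- The projective general linear group PGL₂ of a field. -/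
abbrev PGL2 (K : Type*) [Field K] := GL (Fin 2) K ⧸ Subgroup.center (GL (Fin 2) K)

variable (C : Type*) [Field C] [TopologicalSpace C] [IsTopologicalRing C]

instance : TopologicalSpace (Projectivization C (Fin 2 → C)) :=
  instTopologicalSpaceQuotient

/-- The action of GL₂(C) on the projective line P¹(C) (Möbius transformations). -/
def pact (g : GL (Fin 2) C) :
    Projectivization C (Fin 2 → C) → Projectivization C (Fin 2 → C) :=
  Projectivization.map (Matrix.GeneralLinearGroup.toLin g).toLinearEquiv.toLinearMap
    (Matrix.GeneralLinearGroup.toLin g).toLinearEquiv.injective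

variable {F : Type*} [Field F] (ι : F →+* C)

/-- The set of F-rational points of P¹(C). -/
def rationalPoints : Set (Projectivization C (Fin 2 → C)) :=
  {x | ∃ (v : Fin 2 → F) (h : (fun i => ι (v i)) ≠ 0),
    x = Projectivization.mk C (fun i => ι (v i)) h}

end

open Topology

namespace IsIdempotentElem

variable {K A : Type*} [CommSemiring K] [Ring A] [Algebra K A] {e : A}

def dilation (he : IsIdempotentElem e) : K →* A where
  toFun t := e + t • (1 - e)
  map_one' := by simp
  map_mul' s t := by
    simp only [add_mul, mul_add, smul_mul_assoc, mul_smul_comm, he.eq, he.one_sub.eq,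
      he.mul_one_sub_self, he.one_sub_mul_self, smul_zero, add_zero, zero_add, smul_smul,
      mul_comm t s]

lemma dilation_apply (he : IsIdempotentElem e) (t : K) : he.dilation t = e + t • (1 - e) := rfl

end IsIdempotentElem

namespace Matrix

variable {n R : Type*} [Fintype n]

lemma isIdempotentElem_vecMulVec [CommRing R] {v w : n → R} (h : w ⬝ᵥ v = 1) :
    IsIdempotentElem (vecMulVec v w) := by
  rw [IsIdempotentElem, vecMulVec_mul_vecMulVec, h, one_smul]

lemma tendsto_dilation_mulVec [DecidableEq n] [CommRing R] [TopologicalSpace R]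
    [IsTopologicalRing R] {e : Matrix n n R} (he : IsIdempotentElem e) {α : Type*}
    {l : Filter α} {τ : α → R} {u : α → n → R} {u₀ : n → R} (hτ : Tendsto τ l (𝓝 0))
    (hu : Tendsto u l (𝓝 u₀)) :
    Tendsto (fun j => he.dilation (τ j) *ᵥ u j) l (𝓝 (e *ᵥ u₀)) := by
  have hmulVec (M : Matrix n n R) : Tendsto (fun j => M *ᵥ u j) l (𝓝 (M *ᵥ u₀)) :=
    ((continuous_const.matrix_mulVec continuous_id).tendsto u₀).comp hu
  simpa [he.dilation_apply, add_mulVec, smul_mulVec] using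
    (hmulVec e).add (hτ.smul (hmulVec (1 - e)))

lemma exists_dotProduct_eq_one [DecidableEq n] [Field R] {v : n → R} (hv : v ≠ 0) :
    ∃ w : n → R, w ⬝ᵥ v = 1 := by
  obtain ⟨i, hi⟩ := Function.ne_iff.mp hv
  exact ⟨Pi.single i (v i)⁻¹, by rw [single_dotProduct, inv_mul_cancel₀ hi]⟩

lemma GeneralLinearGroup.mulVec_ne_zero [DecidableEq n] [CommRing R] (g : GL n R)
    {u : n → R} (hu : u ≠ 0) : (g : Matrix n n R) *ᵥ u ≠ 0 := by
  simpa using (mulVec_injective_of_isUnit g.isUnit).ne hu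

lemma GeneralLinearGroup.tendsto_mulVec_inv_mulVec [DecidableEq n] [CommRing R]
    [TopologicalSpace R] [IsTopologicalRing R] {α : Type*} {l : Filter α} {g : α → GL n R}
    {g₀ : GL n R} (hg : Tendsto g l (𝓝 g₀)) (v : n → R) :
    Tendsto (fun j => (g j : Matrix n n R) *ᵥ ((g₀⁻¹ : GL n R) *ᵥ v)) l (𝓝 v) := by
  have hg₀ : (g₀ : Matrix n n R) *ᵥ ((g₀⁻¹ : GL n R) *ᵥ v) = v := by
    rw [mulVec_mulVec, ← Units.val_mul, mul_inv_cancel, Units.val_one, one_mulVec]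
  have := ((Units.continuous_val.matrix_mulVec
    (continuous_const (y := (g₀⁻¹ : GL n R) *ᵥ v))).tendsto g₀).comp hg
  rwa [hg₀] at this

end Matrix

section TraceSqDivDet

variable {K : Type*}

lemma trace_dilation_vecMulVec [CommRing K] {v w : Fin 2 → K} (h : w ⬝ᵥ v = 1) (t : K) :
    ((isIdempotentElem_vecMulVec h).dilation t).trace = 1 + t := by
  rw [IsIdempotentElem.dilation_apply, trace_add, trace_smul, trace_sub, trace_one,
    trace_vecMulVec, dotProduct_comm, h]
  simp only [Fintype.card_fin, smul_eq_mul]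
  ring

lemma det_dilation_vecMulVec [CommRing K] {v w : Fin 2 → K} (h : w ⬝ᵥ v = 1) (t : K) :
    ((isIdempotentElem_vecMulVec h).dilation t).det = t := by
  rw [dotProduct, Fin.sum_univ_two] at h
  simp only [IsIdempotentElem.dilation_apply, det_fin_two, Matrix.add_apply, vecMulVec_apply,
    Matrix.smul_apply, Matrix.sub_apply, one_apply_eq, one_apply_ne zero_ne_one,
    one_apply_ne one_ne_zero, smul_eq_mul]
  linear_combination (t - t ^ 2) * h

variable [NormedField K]

noncomputable def traceSqDivDet (M : Matrix (Fin 2) (Fin 2) K) : ℝ := ‖M.trace‖ ^ 2 / ‖M.det‖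

lemma traceSqDivDet_smul {c : K} (hc : c ≠ 0) (M : Matrix (Fin 2) (Fin 2) K) :
    traceSqDivDet (c • M) = traceSqDivDet M := by
  rw [traceSqDivDet, traceSqDivDet, trace_smul, det_smul, Fintype.card_fin, smul_eq_mul,
    norm_mul, norm_mul, norm_pow, mul_pow, mul_div_mul_left _ _ (by positivity)]

lemma traceSqDivDet_eq_of_mk_eq {g h : GL (Fin 2) K} (hgh : (g : PGL2 K) = h) :
    traceSqDivDet (g : Matrix (Fin 2) (Fin 2) K) =
      traceSqDivDet (h : Matrix (Fin 2) (Fin 2) K) := by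
  rw [QuotientGroup.eq, GeneralLinearGroup.center_eq_range_scalar] at hgh
  obtain ⟨c, hc⟩ := hgh
  rw [← eq_inv_mul_iff_mul_eq.mp hc, Units.val_mul, GeneralLinearGroup.coe_scalar, scalar_apply,
    ← smul_one_eq_diagonal, Matrix.mul_smul, mul_one, traceSqDivDet_smul c.ne_zero]

lemma continuous_traceSqDivDet :
    Continuous fun g : GL (Fin 2) K => traceSqDivDet (g : Matrix (Fin 2) (Fin 2) K) :=
  Continuous.div (by fun_prop) (by fun_prop) fun g => norm_ne_zero_iff.mpr g.det_ne_zero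

lemma tendsto_traceSqDivDet_dilation {v w : Fin 2 → K} (h : w ⬝ᵥ v = 1) {α : Type*}
    {l : Filter α} {τ : α → K} (hτ : Tendsto τ l (𝓝[≠] 0)) :
    Tendsto (fun j => traceSqDivDet ((isIdempotentElem_vecMulVec h).dilation (τ j))) l atTop := by
  have hnum : Tendsto (fun j => ‖1 + τ j‖ ^ 2) l (𝓝 1) := by
    simpa using (((tendsto_nhdsWithin_iff.mp hτ).1.const_add 1).norm.pow 2)
  convert hnum.pos_mul_atTop one_pos (tendsto_norm_nhdsNE_zero.comp hτ).inv_tendsto_nhdsGT_zero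
    using 2 with j
  rw [traceSqDivDet, trace_dilation_vecMulVec h, det_dilation_vecMulVec h, div_eq_mul_inv]
  rfl

end TraceSqDivDet

lemma mk_pow_mul_ne_mk_pow_mul {K : Type*} [NormedField K] {a k k' : GL (Fin 2) K} {m n : ℕ}
    (hmn : m ≤ n) (h : traceSqDivDet ((k * k'⁻¹ : GL (Fin 2) K) : Matrix (Fin 2) (Fin 2) K) <
      traceSqDivDet ((a ^ (n - m) : GL (Fin 2) K) : Matrix (Fin 2) (Fin 2) K)) :
    ((a ^ m * k : GL (Fin 2) K) : PGL2 K) ≠ ((a ^ n * k' : GL (Fin 2) K) : PGL2 K) := by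
  intro heq
  obtain ⟨d, rfl⟩ := Nat.exists_eq_add_of_le hmn
  rw [Nat.add_sub_cancel_left] at h
  refine h.ne (traceSqDivDet_eq_of_mk_eq ?_).symm
  simp only [QuotientGroup.mk_mul, QuotientGroup.mk_inv, QuotientGroup.mk_pow, pow_add,
    mul_assoc, mul_right_inj] at heq ⊢
  rw [heq, mul_inv_cancel_right]

instance {m n R : Type*} [TopologicalSpace R] [LocallyCompactSpace R] [Finite m] [Finite n] :
    LocallyCompactSpace (Matrix m n R) :=
  inferInstanceAs (LocallyCompactSpace (m → n → R))

instance {m n R : Type*} [TopologicalSpace R] [FirstCountableTopology R] [Countable m]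
    [Countable n] : FirstCountableTopology (Matrix m n R) :=
  inferInstanceAs (FirstCountableTopology (m → n → R))

instance {M : Type*} [TopologicalSpace M] [FirstCountableTopology M] :
    FirstCountableTopology Mᵐᵒᵖ :=
  MulOpposite.opHomeomorph.symm.isEmbedding.firstCountableTopology

instance {M : Type*} [TopologicalSpace M] [Monoid M] [FirstCountableTopology M] :
    FirstCountableTopology Mˣ :=
  Units.isEmbedding_embedProduct.firstCountableTopology

section Topology

variable {X Y : Type*} [TopologicalSpace X] [TopologicalSpace Y]

lemma IsOpenMap.exists_isCompact_surjOn [LocallyCompactSpace X] [CompactSpace Y] {q : X → Y}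
    (hq : IsOpenMap q) (hsurj : Function.Surjective q) :
    ∃ K : Set X, IsCompact K ∧ Set.SurjOn q K Set.univ := by
  choose U hUc hUx using fun x : X => exists_compact_mem_nhds x
  have hcover : Set.univ ⊆ ⋃ x, q '' interior (U x) := fun y _ => by
    obtain ⟨x, rfl⟩ := hsurj y
    exact Set.mem_iUnion.mpr ⟨x, Set.mem_image_of_mem q (mem_interior_iff_mem_nhds.mpr (hUx x))⟩
  obtain ⟨s, hs⟩ := isCompact_univ.elim_finite_subcover _ (fun x => hq _ isOpen_interior) hcover
  refine ⟨⋃ x ∈ s, U x, s.isCompact_biUnion fun x _ => hUc x, hs.trans ?_⟩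
  exact Set.iUnion₂_subset fun x hx => Set.image_mono <|
    interior_subset.trans (Set.subset_biUnion_of_mem (u := U) hx)

lemma exists_isCompact_forall_mul_mem {G : Type*} [Group G] [TopologicalSpace G]
    [IsTopologicalGroup G] [LocallyCompactSpace G] (N : Subgroup G) [N.Normal]
    (Γ : Subgroup (G ⧸ N)) [CompactSpace ((G ⧸ N) ⧸ Γ)] :
    ∃ K : Set G, IsCompact K ∧ ∀ g : G, ∃ k ∈ K, ((g * k : G) : G ⧸ N) ∈ Γ := by
  let q : G → (G ⧸ N) ⧸ Γ := fun g => ((g : G ⧸ N) : (G ⧸ N) ⧸ Γ)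
  have hq : IsOpenMap q := QuotientGroup.isOpenMap_coe.comp QuotientGroup.isOpenMap_coe
  have hsurj : Function.Surjective q :=
    (QuotientGroup.mk_surjective (s := Γ)).comp QuotientGroup.mk_surjective
  obtain ⟨K, hK, hKq⟩ := hq.exists_isCompact_surjOn hsurj
  refine ⟨K, hK, fun g => ?_⟩
  obtain ⟨k, hk, hkg⟩ := hKq (Set.mem_univ (q g⁻¹))
  refine ⟨k, hk, ?_⟩
  simpa [q, QuotientGroup.eq] using hkg.symm

end Topology

section ProjectiveLine

variable {C : Type*} [Field C]

lemma pact_mk (g : GL (Fin 2) C) {u : Fin 2 → C} (hu : u ≠ 0) :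
    pact C g (Projectivization.mk C u hu) =
      Projectivization.mk C ((g : Matrix (Fin 2) (Fin 2) C) *ᵥ u) (g.mulVec_ne_zero hu) := by
  simp [pact, Projectivization.map_mk]

lemma tendsto_pact_mk [TopologicalSpace C] [IsTopologicalRing C] {α : Type*} {l : Filter α}
    {g : α → GL (Fin 2) C} {u u₀ : Fin 2 → C} (hu : u ≠ 0) (hu₀ : u₀ ≠ 0)
    (h : Tendsto (fun j => (g j : Matrix (Fin 2) (Fin 2) C) *ᵥ u) l (𝓝 u₀)) :
    Tendsto (fun j => pact C (g j) (Projectivization.mk C u hu)) l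
      (𝓝 (Projectivization.mk C u₀ hu₀)) := by
  simp only [pact_mk]
  exact (continuous_quotient_mk'.tendsto (⟨u₀, hu₀⟩ : {v : Fin 2 → C // v ≠ 0})).comp
    (tendsto_subtype_rng.mpr h)

lemma tendsto_pact_map_mk {F : Type*} [Field F] [TopologicalSpace F]
    [TopologicalSpace C] [IsTopologicalRing C] {ι : F →+* C} (hι : Continuous ι) {α : Type*}
    {l : Filter α} {g : α → GL (Fin 2) F} {z v : Fin 2 → F} (hz : (fun i => ι (z i)) ≠ 0)
    (hv : (fun i => ι (v i)) ≠ 0)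
    (h : Tendsto (fun j => (g j : Matrix (Fin 2) (Fin 2) F) *ᵥ z) l (𝓝 v)) :
    Tendsto (fun j => pact C (GeneralLinearGroup.map ι (g j)) (Projectivization.mk C _ hz)) l
      (𝓝 (Projectivization.mk C _ hv)) := by
  refine tendsto_pact_mk hz hv ?_
  have hmap (j : α) :
      ((GeneralLinearGroup.map ι (g j) : GL (Fin 2) C) : Matrix (Fin 2) (Fin 2) C) *ᵥ
        (fun i => ι (z i)) = fun i => ι (((g j : Matrix (Fin 2) (Fin 2) F) *ᵥ z) i) :=
    funext fun i => (RingHom.map_mulVec ι (g j : Matrix (Fin 2) (Fin 2) F) z i).symm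
  simp only [hmap]
  exact ((continuous_pi fun i => hι.comp (continuous_apply i)).tendsto v).comp h

end ProjectiveLine

lemma exists_hyperbolic_attracting {F : Type*} [NontriviallyNormedField F] {v : Fin 2 → F}
    (hv : v ≠ 0) :
    ∃ a : GL (Fin 2) F,
      Tendsto (fun d => traceSqDivDet ((a ^ d : GL (Fin 2) F) : Matrix (Fin 2) (Fin 2) F))
        atTop atTop ∧
      ∀ {α : Type*} {l : Filter α} {d : α → ℕ} {u : α → Fin 2 → F}, Tendsto d l atTop →
        Tendsto u l (𝓝 v) →
        Tendsto (fun j => ((a ^ d j : GL (Fin 2) F) : Matrix (Fin 2) (Fin 2) F) *ᵥ u j) l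
          (𝓝 v) := by
  obtain ⟨w, hwv⟩ := exists_dotProduct_eq_one hv
  have he := isIdempotentElem_vecMulVec hwv
  obtain ⟨π, hπ0, hπ1⟩ := NormedField.exists_norm_lt_one F
  have hπpow : Tendsto (π ^ ·) atTop (𝓝[≠] 0) :=
    tendsto_nhdsWithin_iff.mpr ⟨tendsto_pow_atTop_nhds_zero_of_norm_lt_one hπ1,
      Eventually.of_forall fun d => pow_ne_zero d (norm_pos_iff.mp hπ0)⟩
  have hev : vecMulVec v w *ᵥ v = v := by
    rw [vecMulVec_mulVec, hwv, MulOpposite.op_one, one_smul]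
  refine ⟨Units.map he.dilation (Units.mk0 π (norm_pos_iff.mp hπ0)), ?_, fun hd hu => ?_⟩
  · simpa using tendsto_traceSqDivDet_dilation hwv hπpow
  · simpa [hev] using
      tendsto_dilation_mulVec he (tendsto_nhdsWithin_iff.mp (hπpow.comp hd)).1 hu

lemma exists_gap_mk_pow_mul_ne {K : Type*} [NormedField K] {a : GL (Fin 2) K}
    {k : ℕ → GL (Fin 2) K} {S : Set (GL (Fin 2) K)} (hS : IsCompact S) (hk : ∀ d, k d ∈ S)
    (ha : Tendsto (fun d => traceSqDivDet ((a ^ d : GL (Fin 2) K) : Matrix (Fin 2) (Fin 2) K))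
      atTop atTop) :
    ∃ L : ℕ, ∀ m n, m + L ≤ n →
      ((a ^ m * k m : GL (Fin 2) K) : PGL2 K) ≠ ((a ^ n * k n : GL (Fin 2) K) : PGL2 K) := by
  obtain ⟨B, hB⟩ := (hS.mul hS.inv).bddAbove_image continuous_traceSqDivDet.continuousOn
  obtain ⟨L, hL⟩ := eventually_atTop.mp (ha.eventually_gt_atTop B)
  refine ⟨L, fun m n hmn => mk_pow_mul_ne_mk_pow_mul (by omega) ?_⟩
  exact (hB ⟨_, Set.mul_mem_mul (hk m) (Set.inv_mem_inv.mpr (hk n)), rfl⟩).trans_lt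
    (hL _ (by omega))

theorem stmt_12_general {F C : Type*} [NontriviallyNormedField F]
    [LocallyCompactSpace F]
    [NontriviallyNormedField C]
    (ι : F →+* C) (hι : Isometry ι)
    (Γ : Subgroup (PGL2 F))
    (hcc : CompactSpace (PGL2 F ⧸ Γ)) :
    ∀ x ∈ rationalPoints C ι,
      ∃ (y : Projectivization C (Fin 2 → C)) (γ : ℕ → GL (Fin 2) F),
        (∀ j, (QuotientGroup.mk (γ j) : PGL2 F) ∈ Γ) ∧
        (∀ i j, i ≠ j →
          (QuotientGroup.mk (γ i) : PGL2 F) ≠ (QuotientGroup.mk (γ j) : PGL2 F)) ∧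
        Tendsto (fun j => pact C (Matrix.GeneralLinearGroup.map ι (γ j)) y)
          atTop (nhds x) := by
  rintro x ⟨v, hιv, rfl⟩
  have hv : v ≠ 0 := fun h => hιv (funext fun i => by simp [h])
  obtain ⟨a, ha_growth, ha_attracts⟩ := exists_hyperbolic_attracting hv
  obtain ⟨K, hK, hKΓ⟩ := exists_isCompact_forall_mul_mem (Subgroup.center (GL (Fin 2) F)) Γ
  choose k hkK hkΓ using fun d => hKΓ (a ^ d)
  obtain ⟨L, hL⟩ := exists_gap_mk_pow_mul_ne hK hkK ha_growth
  obtain ⟨k₀, -, ψ, hψ, hψk⟩ := hK.tendsto_subseq fun j => hkK (j * (L + 1))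
  set n : ℕ → ℕ := fun j => ψ j * (L + 1)
  let z := ((k₀⁻¹ : GL (Fin 2) F) : Matrix (Fin 2) (Fin 2) F) *ᵥ v
  have hz : (fun i => ι (z i)) ≠ 0 := fun h =>
    (k₀⁻¹).mulVec_ne_zero hv (funext fun i => (map_eq_zero ι).mp (congrFun h i))
  refine ⟨Projectivization.mk C _ hz, fun j => a ^ n j * k (n j), fun j => hkΓ _, ?_,
    tendsto_pact_map_mk hι.continuous hz hιv ?_⟩
  · have hlt (i j : ℕ) (hij : i < j) := hL (n i) (n j) (by simp only [n]; nlinarith [hψ hij])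
    exact fun i j hij => hij.lt_or_gt.elim (hlt i j) fun h => (hlt j i h).symm
  · have hn : Tendsto n atTop atTop :=
      tendsto_atTop_mono (fun j => Nat.le_mul_of_pos_right _ (Nat.succ_pos L)) hψ.tendsto_atTop
    simp only [Units.val_mul, ← mulVec_mulVec]
    exact ha_attracts hn (GeneralLinearGroup.tendsto_mulVec_inv_mulVec hψk v)

/-- if Γ is a discrete cocompact subgroup of PGL₂(F), F a nonarchimedean
local field embedded in the completion C of an algebraic closure of F, then every point
of P¹(F) ⊆ P¹(C) is a limit point of Γ. -/
theorem stmt_12 {F C : Type*} [NontriviallyNormedField F] [CompleteSpace F]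
    [LocallyCompactSpace F] [IsUltrametricDist F]
    [NontriviallyNormedField C] [CompleteSpace C] [IsAlgClosed C] [IsUltrametricDist C]
    (ι : F →+* C) (hι : Isometry ι)
    (Γ : Subgroup (PGL2 F)) (hΓ : DiscreteTopology Γ)
    (hcc : CompactSpace (PGL2 F ⧸ Γ)) :
    ∀ x ∈ rationalPoints C ι,
      ∃ (y : Projectivization C (Fin 2 → C)) (γ : ℕ → GL (Fin 2) F),
        (∀ j, (QuotientGroup.mk (γ j) : PGL2 F) ∈ Γ) ∧
        (∀ i j, i ≠ j →
          (QuotientGroup.mk (γ i) : PGL2 F) ≠ (QuotientGroup.mk (γ j) : PGL2 F)) ∧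
        Tendsto (fun j => pact C (Matrix.GeneralLinearGroup.map ι (γ j)) y)
          atTop (nhds x) :=
  stmt_12_general ι hι Γ hcc
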